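/- The subgraph of G induced by the rational unit vectors has chromatic number exactly 3. -/

import Mathlib

open scoped RealInnerProductSpace

/-- The orthogonality graph on the rational points of the unit sphere in `ℝ³`:
vertices are the unit vectors all of whose coordinates are rational, and two
such vectors are adjacent iff they are orthogonal. -/
def rationalSphereGraph :
    SimpleGraph {x : EuclideanSpace ℝ (Fin 3) // ‖x‖ = 1 ∧ ∀ i, ∃ q : ℚ, x i = (q : ℝ)} where
  Adj u v := ⟪(u : EuclideanSpace ℝ (Fin 3)), (v : EuclideanSpace ℝ (Fin 3))⟫ = 0
  symm := ⟨fun u v h => by try dsimp only at h ⊢; rwa [real_inner_comm]⟩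
  loopless := ⟨fun u h => by
    try dsimp only at h
    have : ⟪(u : EuclideanSpace ℝ (Fin 3)), (u : EuclideanSpace ℝ (Fin 3))⟫ = 1 := by
      rw [real_inner_self_eq_norm_sq, u.2.1]; norm_num
    rw [h] at this
    exact one_ne_zero this.symm⟩

/-!
Write a rational unit vector as `a / d` with `a ∈ ℤ³` and `d` odd: this is possible because
`a₁² + a₂² + a₃² = d²` with `d` even forces every `aᵢ` to be even (squares are `0` or `1`
mod `4`), so a factor `2` can be cancelled. With `d` odd the same congruence shows that exactly
one `aᵢ` is odd, and its index `i` is the colour of the vector. Two vectors of the same colour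
cannot be orthogonal: the integer `∑ aⱼ bⱼ` has exactly one odd term, so it is odd. The three
standard basis vectors form a triangle, so three colours are needed.
-/

open Finset

lemma Int.sq_modEq_four_ite (x : ℤ) : x ^ 2 ≡ if Odd x then 1 else 0 [ZMOD 4] := by
  rcases x.even_or_odd with ⟨k, rfl⟩ | hx
  · rw [if_neg (Int.not_odd_iff_even.2 ⟨k, rfl⟩)]
    exact Int.modEq_zero_iff_dvd.2 ⟨k ^ 2, by ring⟩
  · rw [if_pos hx]
    exact Int.sq_mod_four_eq_one_of_odd hx

lemma sum_sq_modEq_card_odd {ι : Type*} (s : Finset ι) (a : ι → ℤ) :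
    ∑ i ∈ s, a i ^ 2 ≡ #{i ∈ s | Odd (a i)} [ZMOD 4] := by
  rw [natCast_card_filter]
  exact Int.ModEq.sum fun i _ => (a i).sq_modEq_four_ite

lemma card_odd_eq_of_sum_three_sq {a : Fin 3 → ℤ} {d : ℤ} (h : ∑ i, a i ^ 2 = d ^ 2) :
    #{i | Odd (a i)} = if Odd d then 1 else 0 := by
  have hmod := (sum_sq_modEq_card_odd univ a).symm.trans (h ▸ d.sq_modEq_four_ite)
  have hle : #{i | Odd (a i)} ≤ 3 := (card_filter_le _ _).trans (by simp)
  split_ifs at hmod ⊢ <;> (simp only [Int.ModEq] at hmod; omega)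

section IntegerCoordinates

variable {ι : Type*} [Fintype ι]

lemma exists_int_div_of_forall_rat (x : EuclideanSpace ℝ ι) (hx : ∀ i, ∃ q : ℚ, x i = q) :
    ∃ (a : ι → ℤ) (d : ℤ), d ≠ 0 ∧ ∀ i, x i = a i / d := by
  choose q hq using hx
  choose k hk using fun i => dvd_prod_of_mem (fun j => (q j).den) (mem_univ i)
  have hD : ∏ j, (q j).den ≠ 0 := prod_ne_zero_iff.2 fun j _ => (q j).den_nz
  generalize ∏ j, (q j).den = D at hk hD
  refine ⟨fun i => (q i).num * k i, D, by exact_mod_cast hD, fun i => ?_⟩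
  have hq' : q i * D = (q i).num * k i := by
    rw [hk i, Nat.cast_mul, ← mul_assoc, Rat.mul_den_eq_num]
  rw [hq, eq_div_iff (by simpa using hD)]
  push_cast
  exact_mod_cast hq'

lemma sum_sq_eq_sq_of_norm_eq_one {x : EuclideanSpace ℝ ι} (hx : ‖x‖ = 1) {a : ι → ℤ} {d : ℤ}
    (hd : d ≠ 0) (hxa : ∀ i, x i = a i / d) : ∑ i, a i ^ 2 = d ^ 2 := by
  have h := EuclideanSpace.real_norm_sq_eq x
  simp only [hx, hxa, div_pow, ← sum_div, one_pow] at h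
  rw [eq_div_iff (by positivity), one_mul] at h
  exact_mod_cast h.symm

lemma sum_mul_eq_zero_of_inner_eq_zero {x y : EuclideanSpace ℝ ι} (hxy : ⟪x, y⟫ = 0)
    {a b : ι → ℤ} {d e : ℤ} (hd : d ≠ 0) (he : e ≠ 0) (hxa : ∀ i, x i = a i / d)
    (hyb : ∀ i, y i = b i / e) : ∑ i, a i * b i = 0 := by
  simp only [PiLp.inner_apply, RCLike.inner_apply, conj_trivial, hxa, hyb, div_mul_div_comm,
    ← sum_div, div_eq_zero_iff, mul_eq_zero, hd, he, Int.cast_eq_zero, or_false] at hxy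
  simp_rw [mul_comm (a _)]
  exact_mod_cast hxy

lemma odd_sum_mul_of_odd [DecidableEq ι] {a b : ι → ℤ} {i : ι} (hai : Odd (a i))
    (hbi : Odd (b i)) (ha : ∀ j ≠ i, Even (a j)) : Odd (∑ j, a j * b j) := by
  rw [← add_sum_erase _ _ (mem_univ i)]
  exact (hai.mul hbi).add_even (even_sum _ fun j hj => (ha j (ne_of_mem_erase hj)).mul_right _)

lemma inner_ne_zero_of_odd [DecidableEq ι] {x y : EuclideanSpace ℝ ι} {a b : ι → ℤ} {d e : ℤ}
    {i : ι} (hd : d ≠ 0) (he : e ≠ 0) (hxa : ∀ j, x j = a j / d) (hyb : ∀ j, y j = b j / e)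
    (hai : Odd (a i)) (hbi : Odd (b i)) (ha : ∀ j ≠ i, Even (a j)) : ⟪x, y⟫ ≠ 0 := fun hxy =>
  Int.not_odd_iff_even.2 (sum_mul_eq_zero_of_inner_eq_zero hxy hd he hxa hyb ▸ Even.zero)
    (odd_sum_mul_of_odd hai hbi ha)

end IntegerCoordinates

lemma exists_odd_div_of_norm_eq_one {x : EuclideanSpace ℝ (Fin 3)} (hx : ‖x‖ = 1)
    {a : Fin 3 → ℤ} {d : ℤ} (hd : d ≠ 0) (hxa : ∀ i, x i = a i / d) :
    ∃ (b : Fin 3 → ℤ) (e : ℤ), Odd e ∧ ∀ i, x i = b i / e := by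
  induction h : d.natAbs using Nat.strong_induction_on generalizing a d with
  | _ n ih =>
  rcases d.even_or_odd with ⟨e, rfl⟩ | hodd
  · have hcard := card_odd_eq_of_sum_three_sq (sum_sq_eq_sq_of_norm_eq_one hx hd hxa)
    rw [if_neg (Int.not_odd_iff_even.2 ⟨e, rfl⟩), card_eq_zero, filter_eq_empty_iff] at hcard
    choose b hb using fun i => Int.not_odd_iff_even.1 (hcard (mem_univ i))
    have he : e ≠ 0 := by rintro rfl; simp at hd
    refine ih e.natAbs (by omega) he (a := b) (fun i => ?_) rfl
    rw [hxa, hb]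
    push_cast
    rw [← two_mul, ← two_mul, mul_div_mul_left _ _ two_ne_zero]
  · exact ⟨a, d, hodd, hxa⟩

lemma exists_int_div_single_odd_coord {x : EuclideanSpace ℝ (Fin 3)} (hx : ‖x‖ = 1)
    (hq : ∀ i, ∃ q : ℚ, x i = q) :
    ∃ (i : Fin 3) (a : Fin 3 → ℤ) (d : ℤ),
      d ≠ 0 ∧ (∀ j, x j = a j / d) ∧ Odd (a i) ∧ ∀ j ≠ i, Even (a j) := by
  obtain ⟨a₀, d₀, hd₀, hxa₀⟩ := exists_int_div_of_forall_rat x hq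
  obtain ⟨a, d, hodd, hxa⟩ := exists_odd_div_of_norm_eq_one hx hd₀ hxa₀
  have hd : d ≠ 0 := by rintro rfl; simp at hodd
  have hcard := card_odd_eq_of_sum_three_sq (sum_sq_eq_sq_of_norm_eq_one hx hd hxa)
  rw [if_pos hodd, card_eq_one] at hcard
  obtain ⟨i, hi⟩ := hcard
  rw [eq_singleton_iff_unique_mem] at hi
  refine ⟨i, a, d, hd, hxa, (mem_filter.1 hi.1).2, fun j hj => ?_⟩
  exact Int.not_odd_iff_even.1 fun hj' => hj (hi.2 j (mem_filter.2 ⟨mem_univ j, hj'⟩))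

lemma rationalSphereGraph_colorable_three : rationalSphereGraph.Colorable 3 := by
  choose c a d hd hxa hodd heven using
    fun v : {x : EuclideanSpace ℝ (Fin 3) // ‖x‖ = 1 ∧ ∀ i, ∃ q : ℚ, x i = q} =>
      exists_int_div_single_odd_coord v.2.1 v.2.2
  exact ⟨.mk c fun {v w} hvw hc =>
    inner_ne_zero_of_odd (hd v) (hd w) (hxa v) (hxa w) (hodd v) (hc ▸ hodd w) (heven v) hvw⟩

lemma three_le_rationalSphereGraph_chromaticNumber : 3 ≤ rationalSphereGraph.chromaticNumber := by
  let e := EuclideanSpace.basisFun (Fin 3) ℝ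
  refine SimpleGraph.le_chromaticNumber_of_pairwise_adj (by simp)
    (fun i => ⟨e i, e.orthonormal.1 i, fun j => ⟨if j = i then 1 else 0, ?_⟩⟩)
    fun i j hij => e.orthonormal.2 hij
  simp [e, apply_ite (Rat.cast : ℚ → ℝ)]

theorem rationalSphereGraph_chromaticNumber :
    rationalSphereGraph.chromaticNumber = 3 :=
  le_antisymm (by exact_mod_cast rationalSphereGraph_colorable_three.chromaticNumber_le)
    three_le_rationalSphereGraph_chromaticNumber
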